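/- Let G be a connected non-trivial graph, H any graph, a ∈ V(G), and x, y ∈ V(H) distinct. Then (a,x) and (a,y) are mutually maximally distant in G∘H if and only if x and y are adjacent in H*, i.e., if and only if d_H(x,y) ≥ 2 or x and y are true twins in H. -/

import Mathlib

open SimpleGraph

namespace Paper

variable {α β : Type*}

/-- The lexicographic product of two simple graphs. -/
def lexProd (G : SimpleGraph α) (H : SimpleGraph β) : SimpleGraph (α × β) where
  Adj p q := G.Adj p.1 q.1 ∨ (p.1 = q.1 ∧ H.Adj p.2 q.2)
  symm := by
    constructor
    rintro ⟨a, b⟩ ⟨c, d⟩ (h | ⟨h1, h2⟩)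
    · exact Or.inl h.symm
    · exact Or.inr ⟨h1.symm, h2.symm⟩
  loopless := by
    constructor
    rintro ⟨a, b⟩ (h | ⟨h1, h2⟩)
    · exact G.irrefl h
    · exact H.irrefl h2

/-- `u` is maximally distant from `v`. -/
def MaxDistant (G : SimpleGraph α) (u v : α) : Prop :=
  ∀ w, G.Adj u w → G.edist v w ≤ G.edist u v

/-- `u` and `v` are mutually maximally distant. -/
def MMD (G : SimpleGraph α) (u v : α) : Prop :=
  MaxDistant G u v ∧ MaxDistant G v u

/-- Two vertices are true twins if they have the same closed neighborhood. -/
def TrueTwins (G : SimpleGraph α) (u v : α) : Prop :=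
  ∀ w, (G.Adj u w ∨ u = w) ↔ (G.Adj v w ∨ v = w)

/-- The boundary of a graph: vertices belonging to some mutually maximally distant pair. -/
def boundary (G : SimpleGraph α) : Set α := {u | ∃ v, u ≠ v ∧ MMD G u v}

/-- The strong resolving graph of `G`, with vertex set the boundary of `G`. -/
def srGraph (G : SimpleGraph α) : SimpleGraph (boundary G) where
  Adj u v := u.1 ≠ v.1 ∧ MMD G u.1 v.1
  symm := ⟨fun u v h => ⟨h.1.symm, h.2.2, h.2.1⟩⟩
  loopless := ⟨fun u h => h.1 rfl⟩

/-- The graph `G*`: same vertices, `u ~ v` iff `d_G(u,v) ≥ 2` or `u,v` are true twins. -/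
def gstar (G : SimpleGraph α) : SimpleGraph α where
  Adj u v := u ≠ v ∧ (2 ≤ G.edist u v ∨ TrueTwins G u v)
  symm := by
    constructor
    rintro u v ⟨h1, (h2 | h2)⟩
    · exact ⟨h1.symm, Or.inl (by rwa [G.edist_comm] at h2)⟩
    · exact ⟨h1.symm, Or.inr fun w => (h2 w).symm⟩
  loopless := ⟨fun u h => h.1 rfl⟩

/-- `G*` with its isolated vertices removed. -/
def gstarMinus (G : SimpleGraph α) : SimpleGraph {x | ∃ y, (gstar G).Adj x y} :=
  SimpleGraph.induce _ (gstar G)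

/-- Disjoint union of two graphs. -/
def disjUnion (G : SimpleGraph α) (H : SimpleGraph β) : SimpleGraph (α ⊕ β) where
  Adj x y := match x, y with
    | Sum.inl a, Sum.inl b => G.Adj a b
    | Sum.inr a, Sum.inr b => H.Adj a b
    | _, _ => False
  symm := by
    constructor
    rintro (a | a) (b | b) h <;> simp_all <;> exact h.symm
  loopless := by
    constructor
    rintro (a | a) h <;> simp_all

/-- `k` disjoint copies of a graph. -/
def copies (k : ℕ) (G : SimpleGraph α) : SimpleGraph (Fin k × α) where
  Adj p q := p.1 = q.1 ∧ G.Adj p.2 q.2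
  symm := ⟨fun p q h => ⟨h.1.symm, h.2.symm⟩⟩
  loopless := ⟨fun p h => G.irrefl h.2⟩

/-- The join `K₁ + H` of a single vertex with `H`. -/
def joinK1 (H : SimpleGraph β) : SimpleGraph (Unit ⊕ β) where
  Adj x y := match x, y with
    | Sum.inl _, Sum.inl _ => False
    | Sum.inl _, Sum.inr _ => True
    | Sum.inr _, Sum.inl _ => True
    | Sum.inr a, Sum.inr b => H.Adj a b
  symm := by
    constructor
    rintro (a | a) (b | b) h <;> simp_all <;> exact h.symm
  loopless := by
    constructor
    rintro (a | a) h <;> simp_all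

/-- `w` strongly resolves the pair `u, v`. -/
def StronglyResolves (G : SimpleGraph α) (w u v : α) : Prop :=
  G.edist w u = G.edist w v + G.edist v u ∨ G.edist w v = G.edist w u + G.edist u v

/-- A strong metric generator. -/
def IsStrongGenerator (G : SimpleGraph α) (S : Finset α) : Prop :=
  ∀ u v : α, u ≠ v → ∃ w ∈ S, StronglyResolves G w u v

/-- The strong metric dimension. -/
noncomputable def sdim (G : SimpleGraph α) : ℕ :=
  sInf {k | ∃ S : Finset α, IsStrongGenerator G S ∧ S.card = k}

/-- A vertex cover. -/
def IsVertexCover (G : SimpleGraph α) (S : Finset α) : Prop :=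
  ∀ ⦃u v : α⦄, G.Adj u v → u ∈ S ∨ v ∈ S

/-- The vertex cover number `α(G)`. -/
noncomputable def vcNum (G : SimpleGraph α) : ℕ :=
  sInf {k | ∃ S : Finset α, IsVertexCover G S ∧ S.card = k}

/-- The independence number `β(G)`. -/
noncomputable def indepNum (G : SimpleGraph α) : ℕ :=
  sSup {k | ∃ S : Finset α, (∀ u ∈ S, ∀ v ∈ S, ¬ G.Adj u v) ∧ S.card = k}

/-!
Two copies `(a, x)`, `(a, y)` of the same vertex of `G` are at distance at most two in `G ∘ H`:
walk through `(b, x)` for a neighbour `b` of `a`, which exists since `G` is connected and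
non-trivial. So if `x` and `y` are not adjacent in `H`, the pair is at distance exactly two, the
largest distance any neighbour can reach, and is mutually maximally distant. If they are adjacent,
in any graph an adjacent pair is mutually maximally distant iff it is a pair of true twins, and
`(a, x)`, `(a, y)` are true twins in `G ∘ H` iff `x`, `y` are in `H`.
-/

section Distance

variable {G : SimpleGraph α} {u v : α}

lemma two_le_edist_iff : 2 ≤ G.edist u v ↔ u ≠ v ∧ ¬ G.Adj u v := by
  rw [← not_lt, ← one_add_one_eq_two, ENat.lt_add_one_iff ENat.one_ne_top,
    edist_le_one_iff_adj_or_eq]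
  tauto

lemma maxDistant_iff_of_adj (huv : G.Adj u v) :
    MaxDistant G u v ↔ ∀ w, G.Adj u w → G.Adj v w ∨ v = w := by
  simp only [MaxDistant, edist_eq_one_iff_adj.mpr huv, edist_le_one_iff_adj_or_eq]

lemma mmd_iff_trueTwins_of_adj (huv : G.Adj u v) : MMD G u v ↔ TrueTwins G u v := by
  rw [MMD, maxDistant_iff_of_adj huv, maxDistant_iff_of_adj huv.symm]
  refine ⟨fun ⟨hu, hv⟩ w => ⟨?_, ?_⟩, fun h => ⟨fun w hw => (h w).1 (.inl hw),
    fun w hw => (h w).2 (.inl hw)⟩⟩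
  · rintro (hw | rfl)
    exacts [hu w hw, .inl huv.symm]
  · rintro (hw | rfl)
    exacts [hv w hw, .inl huv]

end Distance

section LexProd

variable {G : SimpleGraph α} {H : SimpleGraph β} {a b : α} {x y : β}

lemma lexProd_adj_fst_eq_iff : (lexProd G H).Adj (a, x) (a, y) ↔ H.Adj x y := by
  simp [lexProd]

lemma trueTwins_lexProd_fst_eq_iff :
    TrueTwins (lexProd G H) (a, x) (a, y) ↔ TrueTwins H x y := by
  refine ⟨fun h z => ?_, fun h ⟨c, z⟩ => ?_⟩
  · simpa [lexProd, G.irrefl] using h (a, z)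
  · simp only [lexProd, Prod.mk.injEq]
    have := h z
    by_cases hac : a = c <;> simp_all

lemma edist_lexProd_fst_eq_le_two (hab : G.Adj a b) :
    (lexProd G H).edist (a, x) (a, y) ≤ 2 := by
  have hax : (lexProd G H).Adj (a, x) (b, x) := .inl hab
  have hay : (lexProd G H).Adj (b, x) (a, y) := .inl hab.symm
  simpa using (hax.toWalk.append hay.toWalk).edist_le

lemma maxDistant_lexProd_of_not_adj (hab : G.Adj a b) (hxy : x ≠ y) (hnadj : ¬ H.Adj x y) :
    MaxDistant (lexProd G H) (a, x) (a, y) := by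
  have hfar : 2 ≤ (lexProd G H).edist (a, x) (a, y) :=
    two_le_edist_iff.mpr ⟨by simpa, lexProd_adj_fst_eq_iff.not.mpr hnadj⟩
  rintro ⟨c, z⟩ (hac | ⟨rfl, -⟩)
  · calc (lexProd G H).edist (a, y) (c, z) = 1 := edist_eq_one_iff_adj.mpr (.inl hac)
      _ ≤ 2 := one_le_two
      _ ≤ _ := hfar
  · exact (edist_lexProd_fst_eq_le_two hab).trans hfar

end LexProd

theorem stmt_5 (G : SimpleGraph α) (H : SimpleGraph β) (hG : G.Connected)
    (hGn : Nontrivial α) (a : α) (x y : β) (hxy : x ≠ y) :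
    MMD (lexProd G H) (a, x) (a, y) ↔ (gstar H).Adj x y := by
  by_cases hadj : H.Adj x y
  · rw [mmd_iff_trueTwins_of_adj (lexProd_adj_fst_eq_iff.mpr hadj),
      trueTwins_lexProd_fst_eq_iff]
    simp [gstar, two_le_edist_iff, hxy, hadj]
  · obtain ⟨b, hab⟩ := hG.preconnected.exists_adj_of_nontrivial a
    exact iff_of_true
      ⟨maxDistant_lexProd_of_not_adj hab hxy hadj,
        maxDistant_lexProd_of_not_adj hab hxy.symm fun h => hadj h.symm⟩
      ⟨hxy, .inl (two_le_edist_iff.mpr ⟨hxy, hadj⟩)⟩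

end Paper
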